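/- arXiv:1308.4495 — 3 statements merged into one kernel-verified Lean document; each statement's English description precedes it below -/
import Mathlib

section
/- Let A be an unbounded distributive pre-bilattice and θ an equivalence relation on A. Then θ is a congruence of the lattice (A; ∨_t, ∧_t) if and only if θ is a congruence of the lattice (A; ∨_k, ∧_k). -/
/-- An unbounded distributive pre-bilattice: two lattice structures
`(∨_t, ∧_t)` and `(∨_k, ∧_k)` on the same carrier, with each of the four
operations distributing over each of the other three. -/
structure DPBU (A : Type*) where
  tsup : A → A → A
  tinf : A → A → A
  ksup : A → A → A
  kinf : A → A → A
  tsup_comm : ∀ a b, tsup a b = tsup b a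
  tinf_comm : ∀ a b, tinf a b = tinf b a
  tsup_assoc : ∀ a b c, tsup (tsup a b) c = tsup a (tsup b c)
  tinf_assoc : ∀ a b c, tinf (tinf a b) c = tinf a (tinf b c)
  tsup_absorb : ∀ a b, tsup a (tinf a b) = a
  tinf_absorb : ∀ a b, tinf a (tsup a b) = a
  ksup_comm : ∀ a b, ksup a b = ksup b a
  kinf_comm : ∀ a b, kinf a b = kinf b a
  ksup_assoc : ∀ a b c, ksup (ksup a b) c = ksup a (ksup b c)
  kinf_assoc : ∀ a b c, kinf (kinf a b) c = kinf a (kinf b c)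
  ksup_absorb : ∀ a b, ksup a (kinf a b) = a
  kinf_absorb : ∀ a b, kinf a (ksup a b) = a
  tsup_tinf : ∀ a b c, tsup a (tinf b c) = tinf (tsup a b) (tsup a c)
  tsup_ksup : ∀ a b c, tsup a (ksup b c) = ksup (tsup a b) (tsup a c)
  tsup_kinf : ∀ a b c, tsup a (kinf b c) = kinf (tsup a b) (tsup a c)
  tinf_tsup : ∀ a b c, tinf a (tsup b c) = tsup (tinf a b) (tinf a c)
  tinf_ksup : ∀ a b c, tinf a (ksup b c) = ksup (tinf a b) (tinf a c)
  tinf_kinf : ∀ a b c, tinf a (kinf b c) = kinf (tinf a b) (tinf a c)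
  ksup_tsup : ∀ a b c, ksup a (tsup b c) = tsup (ksup a b) (ksup a c)
  ksup_tinf : ∀ a b c, ksup a (tinf b c) = tinf (ksup a b) (ksup a c)
  ksup_kinf : ∀ a b c, ksup a (kinf b c) = kinf (ksup a b) (ksup a c)
  kinf_tsup : ∀ a b c, kinf a (tsup b c) = tsup (kinf a b) (kinf a c)
  kinf_tinf : ∀ a b c, kinf a (tinf b c) = tinf (kinf a b) (kinf a c)
  kinf_ksup : ∀ a b c, kinf a (ksup b c) = ksup (kinf a b) (kinf a c)

/-- The truth order `≤_t`. -/
def DPBU.tle {A : Type*} (B : DPBU A) (a b : A) : Prop := B.tsup a b = b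

/-- The knowledge order `≤_k`. -/
def DPBU.kle {A : Type*} (B : DPBU A) (a b : A) : Prop := B.ksup a b = b

/-- An equivalence relation is compatible with a pair of binary operations
(join and meet), i.e. is a lattice congruence. -/
def IsLatCong {A : Type*} (sup inf : A → A → A) (θ : A → A → Prop) : Prop :=
  (∀ a b c d, θ a b → θ c d → θ (sup a c) (sup b d)) ∧
  (∀ a b c d, θ a b → θ c d → θ (inf a c) (inf b d))

/-!
Each operation `f` of the k-lattice is monotone for the t-order, and on a t-interval `a ≤ b`
the map `x ↦ f x c` agrees at both endpoints with the t-lattice polynomial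
`x ↦ f a c ⊔ (x ⊓ f b c)`. A t-congruence respects lattice polynomials, so it relates `f a c`
and `f b c` whenever it relates the comparable elements `a ≤ b`; the general case passes through
`a ⊓ b`. Exchanging the roles of t and k gives the converse.
-/

section DistribLattice

variable {α : Type*}

theorem Equivalence.map_rel_of_map_rel_of_le [SemilatticeInf α] {θ : α → α → Prop}
    (hθ : Equivalence θ) (hinf : ∀ a b c d, θ a b → θ c d → θ (a ⊓ c) (b ⊓ d)) {g : α → α}
    (hg : ∀ a b, θ a b → a ≤ b → θ (g a) (g b)) {a b : α} (hab : θ a b) : θ (g a) (g b) := by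
  have hinf_a : θ (a ⊓ b) a := by
    simpa only [inf_idem] using hθ.symm (hinf a a a b (hθ.refl a) hab)
  have hinf_b : θ (a ⊓ b) b := by simpa only [inf_idem] using hinf a b b b hab (hθ.refl b)
  exact hθ.trans (hθ.symm (hg _ _ hinf_a inf_le_left)) (hg _ _ hinf_b inf_le_right)

variable [DistribLattice α] {f : α → α → α}

theorem map_le_map_right_of_map_sup (f_sup : ∀ a b c, f a (b ⊔ c) = f a b ⊔ f a c) {a b c : α}
    (h : b ≤ c) : f a b ≤ f a c :=
  calc f a b ≤ f a b ⊔ f a c := le_sup_left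
    _ = f a c := by rw [← f_sup, sup_eq_right.2 h]

theorem map_le_map_left_of_map_sup (f_comm : ∀ a b, f a b = f b a)
    (f_sup : ∀ a b c, f a (b ⊔ c) = f a b ⊔ f a c) {a b c : α} (h : a ≤ b) : f a c ≤ f b c := by
  simpa only [f_comm _ c] using map_le_map_right_of_map_sup f_sup h

theorem map_sup_inf_map_of_le_left (f_sup : ∀ a b c, f a (b ⊔ c) = f a b ⊔ f a c)
    (inf_f : ∀ a b c, a ⊓ f b c = f (a ⊓ b) (a ⊓ c)) {a b c : α} (hab : a ≤ b) :
    f a c ⊔ a ⊓ f b c = f a c := by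
  rw [sup_eq_left, inf_f, inf_eq_left.2 hab]
  exact map_le_map_right_of_map_sup f_sup inf_le_right

theorem map_sup_inf_map_of_le_right (f_comm : ∀ a b, f a b = f b a)
    (f_sup : ∀ a b c, f a (b ⊔ c) = f a b ⊔ f a c)
    (sup_f : ∀ a b c, a ⊔ f b c = f (a ⊔ b) (a ⊔ c)) {a b c : α} (hab : a ≤ b) :
    f a c ⊔ b ⊓ f b c = f b c := by
  have hle : f b c ≤ b ⊔ f a c :=
    calc f b c ≤ f b (b ⊔ c) := map_le_map_right_of_map_sup f_sup le_sup_right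
      _ = b ⊔ f a c := by rw [sup_f, sup_eq_left.2 hab]
  rw [sup_inf_left, sup_eq_right.2 (map_le_map_left_of_map_sup f_comm f_sup hab), sup_comm,
    inf_eq_right.2 hle]

theorem IsLatCong.map_rel_of_distrib {θ : α → α → Prop} (h : IsLatCong (· ⊔ ·) (· ⊓ ·) θ)
    (hθ : Equivalence θ) (f_comm : ∀ a b, f a b = f b a)
    (f_sup : ∀ a b c, f a (b ⊔ c) = f a b ⊔ f a c)
    (sup_f : ∀ a b c, a ⊔ f b c = f (a ⊔ b) (a ⊔ c))
    (inf_f : ∀ a b c, a ⊓ f b c = f (a ⊓ b) (a ⊓ c)) :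
    ∀ a b c d, θ a b → θ c d → θ (f a c) (f b d) := by
  have map_rel_left : ∀ c {a b}, θ a b → θ (f a c) (f b c) := fun c =>
    hθ.map_rel_of_map_rel_of_le h.2 fun a b hab hle => by
      simpa only [map_sup_inf_map_of_le_left f_sup inf_f hle,
        map_sup_inf_map_of_le_right f_comm f_sup sup_f hle] using
        h.1 _ _ _ _ (hθ.refl (f a c)) (h.2 _ _ _ _ hab (hθ.refl (f b c)))
  intro a b c d hab hcd
  exact hθ.trans (map_rel_left c hab) (by simpa only [f_comm b] using map_rel_left b hcd)

end DistribLattice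

namespace DPBU

variable {A : Type*}

abbrev tDistribLattice (B : DPBU A) : DistribLattice A :=
  letI : Max A := ⟨B.tsup⟩
  letI : Min A := ⟨B.tinf⟩
  letI : Lattice A :=
    Lattice.mk' B.tsup_comm B.tsup_assoc B.tinf_comm B.tinf_assoc B.tsup_absorb B.tinf_absorb
  DistribLattice.ofInfSupLe fun a b c => (B.tinf_tsup a b c).le

def swap (B : DPBU A) : DPBU A where
  tsup := B.ksup
  tinf := B.kinf
  ksup := B.tsup
  kinf := B.tinf
  tsup_comm := B.ksup_comm
  tinf_comm := B.kinf_comm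
  tsup_assoc := B.ksup_assoc
  tinf_assoc := B.kinf_assoc
  tsup_absorb := B.ksup_absorb
  tinf_absorb := B.kinf_absorb
  ksup_comm := B.tsup_comm
  kinf_comm := B.tinf_comm
  ksup_assoc := B.tsup_assoc
  kinf_assoc := B.tinf_assoc
  ksup_absorb := B.tsup_absorb
  kinf_absorb := B.tinf_absorb
  tsup_tinf := B.ksup_kinf
  tsup_ksup := B.ksup_tsup
  tsup_kinf := B.ksup_tinf
  tinf_tsup := B.kinf_ksup
  tinf_ksup := B.kinf_tsup
  tinf_kinf := B.kinf_tinf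
  ksup_tsup := B.tsup_ksup
  ksup_tinf := B.tsup_kinf
  ksup_kinf := B.tsup_tinf
  kinf_tsup := B.tinf_ksup
  kinf_tinf := B.tinf_kinf
  kinf_ksup := B.tinf_tsup

theorem isLatCong_k_of_isLatCong_t (B : DPBU A) {θ : A → A → Prop} (hθ : Equivalence θ)
    (h : IsLatCong B.tsup B.tinf θ) : IsLatCong B.ksup B.kinf θ :=
  letI := B.tDistribLattice
  ⟨h.map_rel_of_distrib hθ B.ksup_comm B.ksup_tsup B.tsup_ksup B.tinf_ksup,
    h.map_rel_of_distrib hθ B.kinf_comm B.kinf_tsup B.tsup_kinf B.tinf_kinf⟩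

end DPBU

/-- Proposition 2.2: an equivalence relation on an unbounded distributive
pre-bilattice is a congruence of the t-lattice iff it is a congruence of
the k-lattice. -/
theorem stmt_2 {A : Type*} (B : DPBU A) (θ : A → A → Prop)
    (hEq : Equivalence θ) :
    IsLatCong B.tsup B.tinf θ ↔ IsLatCong B.ksup B.kinf θ :=
  ⟨B.isLatCong_k_of_isLatCong_t hEq, B.swap.isLatCong_k_of_isLatCong_t hEq⟩
end

section
/- Let A be an unbounded distributive pre-bilattice and let F be a filter of the t-lattice (A; ∨_t, ∧_t). Then F is a convex sublattice of the k-lattice (A; ∨_k, ∧_k), i.e., F is closed under ∨_k and ∧_k and is order-convex for ≤_k. -/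
/-! Every element that the statement asks to be in `F` lies `≤_t`-above the `∧_t`-meet of two
elements of `F`: `a ∧_t b ≤_t a ∨_k b` and `a ∧_t b ≤_t a ∧_k b` by distributivity of `∨_t` over
the k-operations, and `a ∧_t c ≤_t b` whenever `a ≤_k b ≤_k c`. -/

namespace DPBU

variable {A : Type*} (B : DPBU A)

lemma tsup_idem (a : A) : B.tsup a a = a := by
  simpa only [B.tinf_absorb] using B.tsup_absorb a (B.tsup a a)

lemma tinf_eq_of_tle {a b : A} (h : B.tle a b) : B.tinf a b = a := by
  rw [← h, B.tinf_absorb]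

lemma kinf_eq_of_kle {a b : A} (h : B.kle a b) : B.kinf a b = a := by
  rw [← h, B.kinf_absorb]

lemma tle_tsup_self (a b : A) : B.tle a (B.tsup a b) := by
  rw [tle, ← B.tsup_assoc, B.tsup_idem]

lemma tsup_kle_tsup (c : A) {a b : A} (h : B.kle a b) : B.kle (B.tsup c a) (B.tsup c b) := by
  rw [kle, ← B.tsup_ksup, h]

lemma tinf_tle_ksup (a b : A) : B.tle (B.tinf a b) (B.ksup a b) := by
  rw [tle, B.tsup_ksup, B.tsup_comm _ a, B.tsup_absorb, B.tsup_comm _ b, B.tinf_comm a b,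
    B.tsup_absorb]

lemma tinf_tle_kinf (a b : A) : B.tle (B.tinf a b) (B.kinf a b) := by
  rw [tle, B.tsup_kinf, B.tsup_comm _ a, B.tsup_absorb, B.tsup_comm _ b, B.tinf_comm a b,
    B.tsup_absorb]

lemma tinf_eq_of_kle_of_kle {x b y : A} (hxb : B.kle x b) (hby : B.kle b y)
    (hbx_t : B.tle b x) (hby_t : B.tle b y) : B.tinf x y = b := by
  have h_ksup : B.tinf x y = B.ksup b (B.tinf x y) := by
    conv_lhs => rw [← hby, B.tinf_ksup, B.tinf_comm, B.tinf_eq_of_tle hbx_t]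
  have h_kinf : B.tinf x y = B.kinf b (B.tinf x y) := by
    conv_lhs => rw [← B.kinf_eq_of_kle hxb, B.tinf_comm, B.tinf_kinf, B.tinf_comm y b,
      B.tinf_eq_of_tle hby_t, B.kinf_comm, B.tinf_comm y x]
  rw [h_ksup, h_kinf, B.ksup_absorb]

/-- Distributivity turns `b ∨_t (a ∧_t c)` into `(b ∨_t a) ∧_t (b ∨_t c)`, and `b ∨_t (-)` is
`≤_k`-monotone, so `b` lies `≤_k`-between the two factors. -/
lemma tinf_tle_of_kle_of_kle {a b c : A} (hab : B.kle a b) (hbc : B.kle b c) :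
    B.tle (B.tinf a c) b := by
  have hxb : B.kle (B.tsup b a) b := by simpa only [B.tsup_idem] using B.tsup_kle_tsup b hab
  have hby : B.kle b (B.tsup b c) := by simpa only [B.tsup_idem] using B.tsup_kle_tsup b hbc
  rw [tle, B.tsup_comm, B.tsup_tinf]
  exact B.tinf_eq_of_kle_of_kle hxb hby (B.tle_tsup_self b a) (B.tle_tsup_self b c)

end DPBU

theorem stmt_4_general {A : Type*} (B : DPBU A) (F : Set A)
    (hup : ∀ a b, a ∈ F → B.tle a b → b ∈ F)
    (hinf : ∀ a b, a ∈ F → b ∈ F → B.tinf a b ∈ F) :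
    (∀ a b, a ∈ F → b ∈ F → B.ksup a b ∈ F) ∧
    (∀ a b, a ∈ F → b ∈ F → B.kinf a b ∈ F) ∧
    (∀ a b c, a ∈ F → c ∈ F → B.kle a b → B.kle b c → b ∈ F) :=
  ⟨fun a b ha hb => hup _ _ (hinf a b ha hb) (B.tinf_tle_ksup a b),
    fun a b ha hb => hup _ _ (hinf a b ha hb) (B.tinf_tle_kinf a b),
    fun a _ c ha hc hab hbc => hup _ _ (hinf a c ha hc) (B.tinf_tle_of_kle_of_kle hab hbc)⟩

/-- A filter of the t-lattice of an unbounded distributive pre-bilattice is a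
convex sublattice of the k-lattice. -/
theorem stmt_4 {A : Type*} (B : DPBU A) (F : Set A)
    (hne : F.Nonempty)
    (hup : ∀ a b, a ∈ F → B.tle a b → b ∈ F)
    (hinf : ∀ a b, a ∈ F → b ∈ F → B.tinf a b ∈ F) :
    (∀ a b, a ∈ F → b ∈ F → B.ksup a b ∈ F) ∧
    (∀ a b, a ∈ F → b ∈ F → B.kinf a b ∈ F) ∧
    (∀ a b c, a ∈ F → c ∈ F → B.kle a b → B.kle b c → b ∈ F) :=
  stmt_4_general B F hup hinf
end

section
/- The variety DB of (bounded) distributive bilattices is generated as a quasivariety by the four-element bilattice 4, i.e., every distributive bilattice embeds into a power of 4. Equivalently: for every distributive bilattice A and every pair of distinct elements a ≠ b in A, there is a bilattice homomorphism h : A → 4 with h(a) ≠ h(b). -/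
/-- A (bounded) distributive bilattice: bounded distributive t-lattice,
k-bounds `0_k`, `1_k`, k-operations given by the 90° Lemma formulas, and an
involutory negation which is a dual endomorphism of the bounded t-lattice
and an endomorphism of the bounded k-lattice. -/
structure DB (A : Type*) extends DPBU A where
  neg : A → A
  tbot : A
  ttop : A
  kbot : A
  ktop : A
  tbot_le : ∀ a, tsup tbot a = a
  le_ttop : ∀ a, tsup a ttop = ttop
  kbot_le : ∀ a, ksup kbot a = a
  le_ktop : ∀ a, ksup a ktop = ktop
  ksup_def : ∀ a b, ksup a b = tsup (tinf (tinf a b) kbot) (tinf (tsup a b) ktop)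
  kinf_def : ∀ a b, kinf a b = tsup (tinf (tinf a b) ktop) (tinf (tsup a b) kbot)
  neg_neg : ∀ a, neg (neg a) = a
  neg_tsup : ∀ a b, neg (tsup a b) = tinf (neg a) (neg b)
  neg_tinf : ∀ a b, neg (tinf a b) = tsup (neg a) (neg b)
  neg_ksup : ∀ a b, neg (ksup a b) = ksup (neg a) (neg b)
  neg_kinf : ∀ a b, neg (kinf a b) = kinf (neg a) (neg b)
  neg_tbot : neg tbot = ttop
  neg_ttop : neg ttop = tbot
  neg_kbot : neg kbot = kbot
  neg_ktop : neg ktop = ktop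

/-- The four-element distributive bilattice `4` (= FOUR with bounds), on binary
strings `{00,01,10,11}` represented as `Bool × Bool` (so `00 = (false,false)`
etc.).  The t-order has bottom `00` and top `11`; the k-order has bottom `01`
and top `10`; negation swaps `00 ↔ 11` and fixes `01`, `10`. -/
def fourDB : DB (Bool × Bool) where
  tsup p q := (p.1 || q.1, p.2 || q.2)
  tinf p q := (p.1 && q.1, p.2 && q.2)
  ksup p q := (p.1 || q.1, p.2 && q.2)
  kinf p q := (p.1 && q.1, p.2 || q.2)
  neg p := (!p.2, !p.1)
  tbot := (false, false)
  ttop := (true, true)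
  kbot := (false, true)
  ktop := (true, false)
  tsup_comm := by decide
  tinf_comm := by decide
  tsup_assoc := by decide
  tinf_assoc := by decide
  tsup_absorb := by decide
  tinf_absorb := by decide
  ksup_comm := by decide
  kinf_comm := by decide
  ksup_assoc := by decide
  kinf_assoc := by decide
  ksup_absorb := by decide
  kinf_absorb := by decide
  tsup_tinf := by decide
  tsup_ksup := by decide
  tsup_kinf := by decide
  tinf_tsup := by decide
  tinf_ksup := by decide
  tinf_kinf := by decide
  ksup_tsup := by decide
  ksup_tinf := by decide
  ksup_kinf := by decide
  kinf_tsup := by decide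
  kinf_tinf := by decide
  kinf_ksup := by decide
  tbot_le := by decide
  le_ttop := by decide
  kbot_le := by decide
  le_ktop := by decide
  ksup_def := by decide
  kinf_def := by decide
  neg_neg := by decide
  neg_tsup := by decide
  neg_tinf := by decide
  neg_ksup := by decide
  neg_kinf := by decide
  neg_tbot := by decide
  neg_ttop := by decide
  neg_kbot := by decide
  neg_ktop := by decide

open Order

theorem Order.Ideal.IsPrime.inf_mem_iff {P : Type*} [SemilatticeInf P] {J : Ideal P}
    (hJ : J.IsPrime) {x y : P} : x ⊓ y ∈ J ↔ x ∈ J ∨ y ∈ J :=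
  ⟨hJ.mem_or_mem, fun h => h.elim (J.lower inf_le_left) (J.lower inf_le_right)⟩

section PrimeSeparation

variable {α : Type*} [DistribLattice α]

theorem DistribLattice.exists_isPrime_of_not_le {x y : α} (h : ¬x ≤ y) :
    ∃ J : Ideal α, J.IsPrime ∧ y ∈ J ∧ x ∉ J := by
  have hdisj : Disjoint (PFilter.principal x : Set α) (Ideal.principal y : Set α) :=
    Set.disjoint_left.mpr fun _ hxz hzy => h (le_trans hxz hzy)
  obtain ⟨J, hJ, hyJ, hxJ⟩ := DistribLattice.prime_ideal_of_disjoint_filter_ideal hdisj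
  exact ⟨J, hJ, hyJ Ideal.mem_principal_self,
    Set.disjoint_left.mp hxJ (PFilter.mem_principal.mpr le_rfl)⟩

variable [OrderBot α] {c d x y : α}

theorem Disjoint.exists_isPrime_of_not_inf_le (hcd : Disjoint c d) (h : ¬x ⊓ d ≤ y) :
    ∃ J : Ideal α, J.IsPrime ∧ c ∈ J ∧ d ∉ J ∧ x ∉ J ∧ y ∈ J := by
  have hxd : ¬x ⊓ d ≤ y ⊔ c := fun hle => h <| calc
    x ⊓ d ≤ (y ⊔ c) ⊓ d := le_inf hle inf_le_right
    _ = y ⊓ d := by rw [inf_sup_right, hcd.eq_bot, sup_bot_eq]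
    _ ≤ y := inf_le_left
  obtain ⟨J, hJ, hycJ, hxdJ⟩ := DistribLattice.exists_isPrime_of_not_le hxd
  rw [Ideal.sup_mem_iff] at hycJ
  exact ⟨J, hJ, hycJ.2, fun hd => hxdJ (J.lower inf_le_right hd),
    fun hx => hxdJ (J.lower inf_le_left hx), hycJ.1⟩

theorem Disjoint.exists_isPrime_of_inf_ne (hcd : Disjoint c d) (h : x ⊓ d ≠ y ⊓ d) :
    ∃ J : Ideal α, J.IsPrime ∧ c ∈ J ∧ d ∉ J ∧ ¬(x ∈ J ↔ y ∈ J) := by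
  have separate : ∀ {u v : α}, ¬u ⊓ d ≤ v ⊓ d →
      ∃ J : Ideal α, J.IsPrime ∧ c ∈ J ∧ d ∉ J ∧ ¬(u ∈ J ↔ v ∈ J) := by
    intro u v huv
    obtain ⟨J, hJ, hc, hd, hu, hv⟩ :=
      hcd.exists_isPrime_of_not_inf_le fun hle => huv (le_inf hle inf_le_right)
    exact ⟨J, hJ, hc, hd, fun huv => hu (huv.mpr hv)⟩
  rcases h.not_le_or_not_ge with hxy | hyx
  · exact separate hxy
  · obtain ⟨J, hJ, hc, hd, hsep⟩ := separate hyx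
    exact ⟨J, hJ, hc, hd, fun e => hsep e.symm⟩

end PrimeSeparation

namespace DB

variable {A : Type*} (B : DB A)

def TLattice (_ : DB A) : Type _ := A

instance : Max B.TLattice := ⟨B.tsup⟩

instance : Min B.TLattice := ⟨B.tinf⟩

instance : Lattice B.TLattice :=
  Lattice.mk' B.tsup_comm B.tsup_assoc B.tinf_comm B.tinf_assoc B.tsup_absorb B.tinf_absorb

instance : DistribLattice B.TLattice :=
  .ofInfSupLe fun x y z => le_of_eq (α := B.TLattice) (B.tinf_tsup x y z)

instance : BoundedOrder B.TLattice where
  top := B.ttop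
  le_top := B.le_ttop
  bot := B.tbot
  bot_le := B.tbot_le

theorem tinf_kbot_ktop : B.tinf B.kbot B.ktop = B.tbot := by
  have h := B.kbot_le B.tbot
  rwa [B.ksup_def, show B.tinf B.kbot B.tbot = B.tbot from inf_bot_eq (α := B.TLattice) _,
    show B.tinf B.tbot B.kbot = B.tbot from bot_inf_eq (α := B.TLattice) _,
    show B.tsup B.kbot B.tbot = B.kbot from sup_bot_eq (α := B.TLattice) _, B.tbot_le] at h

theorem tinf_ktop_ne_or_neg_tinf_ktop_ne {a b : A} (hab : a ≠ b) :
    B.tinf a B.ktop ≠ B.tinf b B.ktop ∨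
      B.tinf (B.neg a) B.ktop ≠ B.tinf (B.neg b) B.ktop := by
  by_contra! h
  have hsup : B.tsup a B.ktop = B.tsup b B.ktop := by
    apply Function.Involutive.injective B.neg_neg
    rw [B.neg_tsup, B.neg_tsup, B.neg_ktop]
    exact h.2
  exact hab (eq_of_inf_eq_sup_eq (α := B.TLattice) h.1 hsup)

open Classical in
noncomputable def toFour (J : Ideal B.TLattice) (x : A) : Bool × Bool :=
  (decide (x ∉ J), decide (B.neg x ∈ J))

variable {B} {J : Ideal B.TLattice}

theorem mem_tsup_iff {x y : A} : B.tsup x y ∈ J ↔ x ∈ J ∧ y ∈ J :=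
  Ideal.sup_mem_iff (P := B.TLattice)

theorem mem_tinf_iff (hJ : J.IsPrime) {x y : A} : B.tinf x y ∈ J ↔ x ∈ J ∨ y ∈ J :=
  hJ.inf_mem_iff (P := B.TLattice)

theorem toFour_tsup (hJ : J.IsPrime) (x y : A) :
    B.toFour J (B.tsup x y) = fourDB.tsup (B.toFour J x) (B.toFour J y) := by
  classical
  simp [toFour, fourDB, B.neg_tsup, mem_tsup_iff, mem_tinf_iff hJ]

theorem toFour_tinf (hJ : J.IsPrime) (x y : A) :
    B.toFour J (B.tinf x y) = fourDB.tinf (B.toFour J x) (B.toFour J y) := by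
  classical
  simp [toFour, fourDB, B.neg_tinf, mem_tsup_iff, mem_tinf_iff hJ, not_or]

theorem toFour_neg (x : A) : B.toFour J (B.neg x) = fourDB.neg (B.toFour J x) := by
  simp [toFour, fourDB, B.neg_neg]

theorem tbot_mem : B.tbot ∈ J :=
  J.bot_mem

theorem ttop_notMem (hktop : B.ktop ∉ J) : B.ttop ∉ J :=
  fun h => hktop (J.lower le_top h)

theorem toFour_tbot (hktop : B.ktop ∉ J) : B.toFour J B.tbot = fourDB.tbot := by
  simp [toFour, fourDB, B.neg_tbot, tbot_mem, ttop_notMem hktop]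

theorem toFour_ttop (hktop : B.ktop ∉ J) : B.toFour J B.ttop = fourDB.ttop := by
  simp [toFour, fourDB, B.neg_ttop, tbot_mem, ttop_notMem hktop]

theorem toFour_kbot (hkbot : B.kbot ∈ J) : B.toFour J B.kbot = fourDB.kbot := by
  simp [toFour, fourDB, B.neg_kbot, hkbot]

theorem toFour_ktop (hktop : B.ktop ∉ J) : B.toFour J B.ktop = fourDB.ktop := by
  simp [toFour, fourDB, B.neg_ktop, hktop]

theorem toFour_eq_toFour_iff {x y : A} :
    B.toFour J x = B.toFour J y ↔ (x ∈ J ↔ y ∈ J) ∧ (B.neg x ∈ J ↔ B.neg y ∈ J) := by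
  simp [toFour]

variable (B)

theorem exists_isPrime_toFour_ne {a b : A} (hab : a ≠ b) :
    ∃ J : Ideal B.TLattice, J.IsPrime ∧ B.kbot ∈ J ∧ B.ktop ∉ J ∧ B.toFour J a ≠ B.toFour J b := by
  simp only [ne_eq, toFour_eq_toFour_iff]
  have hk : Disjoint (α := B.TLattice) B.kbot B.ktop := disjoint_iff.mpr B.tinf_kbot_ktop
  rcases B.tinf_ktop_ne_or_neg_tinf_ktop_ne hab with h | h
  · obtain ⟨J, hJ, hkbot, hktop, hsep⟩ :=
      hk.exists_isPrime_of_inf_ne (α := B.TLattice) (x := a) (y := b) h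
    exact ⟨J, hJ, hkbot, hktop, fun e => hsep e.1⟩
  · obtain ⟨J, hJ, hkbot, hktop, hsep⟩ :=
      hk.exists_isPrime_of_inf_ne (α := B.TLattice) (x := B.neg a) (y := B.neg b) h
    exact ⟨J, hJ, hkbot, hktop, fun e => hsep e.2⟩

end DB

/-- Proposition 4.1: `DB = ISP(4)`.  For every distributive bilattice `A` and
distinct `a ≠ b` there is a bilattice homomorphism `h : A → 4` separating `a`
and `b`; hence every distributive bilattice embeds into a power of `4`. -/
theorem stmt_12 {A : Type*} (B : DB A) (a b : A) (hab : a ≠ b) :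
    ∃ h : A → Bool × Bool,
      (∀ x y, h (B.tsup x y) = fourDB.tsup (h x) (h y)) ∧
      (∀ x y, h (B.tinf x y) = fourDB.tinf (h x) (h y)) ∧
      (∀ x, h (B.neg x) = fourDB.neg (h x)) ∧
      h B.tbot = fourDB.tbot ∧ h B.ttop = fourDB.ttop ∧
      h B.kbot = fourDB.kbot ∧ h B.ktop = fourDB.ktop ∧
      h a ≠ h b := by
  obtain ⟨J, hJ, hkbot, hktop, hne⟩ := B.exists_isPrime_toFour_ne hab
  exact ⟨B.toFour J, DB.toFour_tsup hJ, DB.toFour_tinf hJ, DB.toFour_neg, DB.toFour_tbot hktop,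
    DB.toFour_ttop hktop, DB.toFour_kbot hkbot, DB.toFour_ktop hktop, hne⟩
end
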